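/- Equivalence of head-cluster definitions: a conjunctive query Q has the head-cluster property (every relation in each connected component of G^∃_Q is a dominant relation for that component) if and only if for every pair of relations R_i, R_j ∈ rels(Q) with head(R_i) ≠ head(R_j), attr(R_i) ∩ attr(R_j) ⊆ head(Q). -/

import Mathlib

open Set

/-- A conjunctive query: a set of relation atoms (indexed by `ι`), each with a
set of attributes, together with a set of output (head) attributes. -/
structure CQ (ι Attr : Type) where
  attrs : ι → Set Attr
  head : Set Attr

variable {ι κ Attr V : Type}

/-- A database for `Q`: for each relation, a set of tuples over its attributes. -/
def Db (Q : CQ ι Attr) (V : Type) : Type := ∀ i : ι, Set (↥(Q.attrs i) → V)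

/-- Restriction (projection) of a full assignment to a set of attributes. -/
def restrict (f : Attr → V) (S : Set Attr) : ↥S → V := fun a => f a.1

/-- Query evaluation: projections onto the head of all joint assignments
consistent with every relation. -/
def CQ.eval (Q : CQ ι Attr) (D : Db Q V) : Set (↥Q.head → V) :=
  { h | ∃ f : Attr → V, (∀ i, restrict f (Q.attrs i) ∈ D i) ∧ restrict f Q.head = h }

/-- Sub-database (componentwise inclusion). -/
def Db.le {Q : CQ ι Attr} (D' D : Db Q V) : Prop := ∀ i, D' i ⊆ D i

/-- A witness: a sub-database preserving the query result. -/
def IsWitness (Q : CQ ι Attr) (D D' : Db Q V) : Prop :=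
  Db.le D' D ∧ Q.eval D' = Q.eval D

/-- Total number of tuples of a database. -/
noncomputable def dbSize [Fintype ι] {Q : CQ ι Attr} (D : Db Q V) : ℕ :=
  ∑ i, (D i).ncard

/-- A smallest witness. -/
def IsSmallestWitness [Fintype ι] (Q : CQ ι Attr) (D D' : Db Q V) : Prop :=
  IsWitness Q D D' ∧ ∀ D'' : Db Q V, IsWitness Q D D'' → dbSize D' ≤ dbSize D''

/-- Adjacency in the existential-connectivity graph `G^∃_Q`: two relations are
adjacent if they share a non-output attribute. -/
def exAdj (Q : CQ ι Attr) (i j : ι) : Prop :=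
  ((Q.attrs i ∩ Q.attrs j) \ Q.head).Nonempty

/-- Vertices of `G^∃_Q`: relations containing a non-output attribute. -/
def IsExVertex (Q : CQ ι Attr) (i : ι) : Prop := (Q.attrs i \ Q.head).Nonempty

/-- `E` is a connected component of the existential-connectivity graph `G^∃_Q`. -/
def IsCompOf (Q : CQ ι Attr) (E : Set ι) : Prop :=
  E.Nonempty ∧ (∀ i ∈ E, IsExVertex Q i) ∧
  (∀ i ∈ E, ∀ j : ι, IsExVertex Q j → exAdj Q i j → j ∈ E) ∧
  (∀ i ∈ E, ∀ j ∈ E, Relation.ReflTransGen (fun a b => exAdj Q a b ∧ b ∈ E) i j)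

/-- `r` is a dominant relation for the set `E` of relations: every output
attribute appearing in a relation of `E` also appears in `r`. -/
def IsDominant (Q : CQ ι Attr) (E : Set ι) (r : ι) : Prop :=
  ∀ j ∈ E, Q.attrs j ∩ Q.head ⊆ Q.attrs r

/-- The head-cluster property: every relation in each connected component of
`G^∃_Q` is a dominant relation for that component. -/
def HasHeadCluster (Q : CQ ι Attr) : Prop :=
  ∀ E : Set ι, IsCompOf Q E → ∀ r ∈ E, IsDominant Q E r

/-!
Along an edge of `G^∃_Q` two relations share an existential attribute. If relations with
different heads never share one, heads are constant along paths, hence on each component, and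
then every relation of a component dominates it. Conversely, two relations sharing an
existential attribute lie in a common component, and being dominant for it each contains the
head of the other.
-/

theorem Relation.ReflTransGen.restrict_of_closed {α : Type*} {r : α → α → Prop} {E : Set α}
    (hE : ∀ a b, r a b → a ∈ E → b ∈ E) {a b : α} (ha : a ∈ E) (hab : ReflTransGen r a b) :
    ReflTransGen (fun x y => r x y ∧ y ∈ E) a b := by
  induction hab using Relation.ReflTransGen.head_induction_on with
  | refl => exact .refl
  | head hac _ ih =>
    have hc := hE _ _ hac ha
    exact .head ⟨hac, hc⟩ (ih hc)

theorem Relation.ReflTransGen.eq_of_forall_eq {α β : Type*} {r : α → α → Prop} (f : α → β)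
    (hf : ∀ a b, r a b → f a = f b) {a b : α} (hab : ReflTransGen r a b) : f a = f b := by
  induction hab with
  | refl => rfl
  | tail _ hbc ih => exact ih.trans (hf _ _ hbc)

namespace CQ

variable (Q : CQ ι Attr)

instance : Std.Symm (exAdj Q) where
  symm _ _ := fun ⟨x, ⟨hxa, hxb⟩, hx⟩ => ⟨x, ⟨hxb, hxa⟩, hx⟩

theorem isExVertex_of_exAdj {i j : ι} (h : exAdj Q i j) : IsExVertex Q j :=
  let ⟨x, hx, hxh⟩ := h; ⟨x, hx.2, hxh⟩

theorem headAttrs_eq_of_exAdj {i j : ι}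
    (hij : Q.attrs i ∩ Q.head ≠ Q.attrs j ∩ Q.head → Q.attrs i ∩ Q.attrs j ⊆ Q.head)
    (h : exAdj Q i j) : Q.attrs i ∩ Q.head = Q.attrs j ∩ Q.head :=
  let ⟨_, hx, hxh⟩ := h; by_contra fun hne => hxh (hij hne hx)

/-- The connected component of `G^∃_Q` through `i`; when `i` is not a vertex this is `{i}`. -/
def exComp (i : ι) : Set ι := {k | Relation.ReflTransGen (exAdj Q) i k}

theorem isCompOf_exComp {i : ι} (hi : IsExVertex Q i) : IsCompOf Q (Q.exComp i) := by
  have closed : ∀ k l, exAdj Q k l → k ∈ Q.exComp i → l ∈ Q.exComp i :=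
    fun _ _ hkl hk => Relation.ReflTransGen.tail hk hkl
  refine ⟨⟨i, .refl⟩, ?_, fun k hk l _ hkl => closed k l hkl hk, ?_⟩
  · intro k hk
    rcases Relation.ReflTransGen.cases_tail hk with rfl | ⟨_, _, hk'⟩
    · exact hi
    · exact Q.isExVertex_of_exAdj hk'
  · intro k hk l hl
    exact Relation.ReflTransGen.restrict_of_closed closed hk ((Std.Symm.symm _ _ hk).trans hl)

theorem headAttrs_eq_of_isDominant {E : Set ι} {i j : ι} (hi : i ∈ E) (hj : j ∈ E)
    (hdi : IsDominant Q E i) (hdj : IsDominant Q E j) :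
    Q.attrs i ∩ Q.head = Q.attrs j ∩ Q.head :=
  Subset.antisymm (fun _ hx => ⟨hdj i hi hx, hx.2⟩) (fun _ hx => ⟨hdi j hj hx, hx.2⟩)

end CQ

/-- Equivalence of head-cluster definitions: a conjunctive query
`Q` has the head-cluster property iff for every pair of relations `R_i, R_j`
with `head(R_i) ≠ head(R_j)`, `attr(R_i) ∩ attr(R_j) ⊆ head(Q)`. -/
theorem headCluster_iff_pairwise (Q : CQ ι Attr) :
    HasHeadCluster Q ↔
      ∀ i j : ι, Q.attrs i ∩ Q.head ≠ Q.attrs j ∩ Q.head →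
        Q.attrs i ∩ Q.attrs j ⊆ Q.head := by
  constructor
  · intro hHC i j hne x hx
    by_contra hxh
    have hij : exAdj Q i j := ⟨x, hx, hxh⟩
    have hcomp := Q.isCompOf_exComp ⟨x, hx.1, hxh⟩
    have hj : j ∈ Q.exComp i := .single hij
    exact hne <| Q.headAttrs_eq_of_isDominant .refl hj (hHC _ hcomp i .refl) (hHC _ hcomp j hj)
  · intro hpw E hE r hr j hj
    have hpath : Relation.ReflTransGen (exAdj Q) r j :=
      Relation.ReflTransGen.mono (fun _ _ h => h.1) r j (hE.2.2.2 r hr j hj)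
    have hrj := hpath.eq_of_forall_eq (fun k => Q.attrs k ∩ Q.head)
      fun a b => Q.headAttrs_eq_of_exAdj (hpw a b)
    exact hrj ▸ inter_subset_left
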